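/- Let n ≥ 4, let T ∈ 𝒯_n, and let θ, θ' ∈ O_TBR(T) be distinct TBR operations on T. If θ(T) = θ'(T), then θ is an NNI operation, i.e. θ ∈ O_NNI(T). -/

import Mathlib

/-!
Formalization framework for unrooted binary phylogenetic trees on the
leaf set `Fin n`, encoded via their split systems (Buneman's
splits-equivalence theorem: a binary phylogenetic tree is uniquely
determined by its set of splits, which is a maximal pairwise-compatible
collection of proper bipartitions of the leaf set containing all
trivial splits).  A split `A | Aᶜ` is recorded by storing both of its
sides.
-/

/-- Two sides (subsets of leaves) are compatible: the corresponding
splits can coexist in a tree. -/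
def SidesCompatible {n : ℕ} (A B : Finset (Fin n)) : Prop :=
  A ⊆ B ∨ B ⊆ A ∨ Disjoint A B ∨ A ∪ B = Finset.univ

/-- An unrooted binary phylogenetic tree on leaf set `Fin n`,
represented by the set of sides of its splits. -/
structure PhyloTree (n : ℕ) where
  sides : Finset (Finset (Fin n))
  proper : ∀ A ∈ sides, A.Nonempty ∧ A ≠ Finset.univ
  compl_mem : ∀ A ∈ sides, Aᶜ ∈ sides
  singleton_mem : ∀ x : Fin n, {x} ∈ sides
  compatible : ∀ A ∈ sides, ∀ B ∈ sides, SidesCompatible A B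
  maximal : ∀ A : Finset (Fin n), A.Nonempty → A ≠ Finset.univ →
    (∀ B ∈ sides, SidesCompatible A B) → A ∈ sides

namespace PhyloTree

variable {n : ℕ}

/-- The split system of the restricted tree `T|X`: two trees agree on
`X` (i.e. `T|X = T'|X`) iff their restricted split systems agree. -/
def restrict (T : PhyloTree n) (X : Finset (Fin n)) : Finset (Finset (Fin n)) :=
  T.sides.image (· ∩ X)

/-- `Γ(T)`: the sum of `|A| * |B|` over all non-trivial splits `A|B` of
`T` (each unordered split is stored twice in `sides`, hence the
division by two, which is exact). -/
def gamma (T : PhyloTree n) : ℕ :=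
  (∑ A ∈ T.sides.filter (fun A => 2 ≤ A.card ∧ 2 ≤ Aᶜ.card), A.card * Aᶜ.card) / 2

/-- A tree-rearrangement move: the deleted edge of `T` (recorded as the
unordered split it induces) together with the output tree. -/
abbrev Move (n : ℕ) := Sym2 (Finset (Fin n)) × PhyloTree n

/-- The set of TBR operations on `T`: delete the edge inducing the
split `A | Aᶜ` and reconnect, obtaining a distinct tree `θ.2`.  The
defining property is that deleting the corresponding edges from `T`
and from `θ.2` yields the same forest, i.e. `A|Aᶜ` is a split of both
trees and the two restrictions agree. -/
def OTBR (T : PhyloTree n) : Set (Move n) :=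
  { θ | θ.2 ≠ T ∧ ∃ A : Finset (Fin n),
      θ.1 = Sym2.mk A Aᶜ ∧ A ∈ T.sides ∧ A ∈ θ.2.sides ∧
      T.restrict A = θ.2.restrict A ∧ T.restrict Aᶜ = θ.2.restrict Aᶜ }

/-- SPR operations: TBR operations where one component `T|A` of the
bisection (the pruned subtree) is regrafted preserving its rooting,
i.e. `T|(A ∪ {x}) = θ(T)|(A ∪ {x})` for some (equivalently every) leaf
`x` of the other side. -/
def OSPR (T : PhyloTree n) : Set (Move n) :=
  { θ | θ ∈ T.OTBR ∧ ∃ A : Finset (Fin n), θ.1 = Sym2.mk A Aᶜ ∧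
      ∃ x ∈ Aᶜ, T.restrict (insert x A) = θ.2.restrict (insert x A) }

/-- The effect on sides of swapping the pendant subtrees `T|Y` and
`T|Z` (for disjoint clusters `Y`, `Z`). -/
def swapSide (Y Z A : Finset (Fin n)) : Finset (Fin n) :=
  if Y ⊆ A ∧ Disjoint Z A then (A \ Y) ∪ Z
  else if Z ⊆ A ∧ Disjoint Y A then (A \ Z) ∪ Y
  else A

/-- NNI operations: SPR operations in which the pruned subtree `T|Y` is
swapped with a pendant subtree `T|Z` for some cluster `Z ≠ Y` of `T`. -/
def ONNI (T : PhyloTree n) : Set (Move n) :=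
  { θ | θ ∈ T.OTBR ∧ ∃ Y Z : Finset (Fin n),
      θ.1 = Sym2.mk Y Yᶜ ∧
      (∃ x ∈ Yᶜ, T.restrict (insert x Y) = θ.2.restrict (insert x Y)) ∧
      Z ∈ T.sides ∧ Z ≠ Y ∧ Disjoint Y Z ∧
      θ.2.sides = T.sides.image (swapSide Y Z) }

/-- The TBR neighbourhood `N_TBR(T) = {θ(T) : θ ∈ O_TBR(T)}`. -/
def NTBR (T : PhyloTree n) : Set (PhyloTree n) := Prod.snd '' T.OTBR

/-- The SPR neighbourhood. -/
def NSPR (T : PhyloTree n) : Set (PhyloTree n) := Prod.snd '' T.OSPR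

/-- The NNI neighbourhood. -/
def NNNI (T : PhyloTree n) : Set (PhyloTree n) := Prod.snd '' T.ONNI

/-- A caterpillar: every internal vertex (equivalently, every
tripartition of the leaves into three clusters) is adjacent to a
leaf. -/
def IsCaterpillar (T : PhyloTree n) : Prop :=
  ∀ A B C : Finset (Fin n), A ∈ T.sides → B ∈ T.sides → C ∈ T.sides →
    Disjoint A B → Disjoint A C → Disjoint B C → A ∪ B ∪ C = Finset.univ →
    (A.card = 1 ∨ B.card = 1 ∨ C.card = 1)

/-- A complete (maximally balanced) tree. -/
def IsComplete (T : PhyloTree n) : Prop :=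
  ∃ k : ℕ, 3 * 2 ^ k ≤ n ∧ n < 3 * 2 ^ (k + 1) ∧
    (∃ Y ∈ T.sides, Y.card = 2 ^ (k + 1)) ∧
    ∀ Y ∈ T.sides, 2 ≤ Y.card → Y.card ≤ 2 ^ (k + 1) →
      ∃ Y₁ Y₂ : Finset (Fin n), Y₁ ∈ T.sides ∧ Y₂ ∈ T.sides ∧
        Disjoint Y₁ Y₂ ∧ Y₁ ∪ Y₂ = Y ∧
        ∃ j : ℕ, Y₁.card = 2 ^ j ∧ 2 ^ (j - 1) ≤ Y₂.card ∧ Y₂.card < 2 ^ (j + 1)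

/-- The pendant subtree on the cluster `S` is perfectly balanced:
every cluster inside `S` with at least two leaves splits into two
equal-sized child clusters. -/
def PerfOn (T : PhyloTree n) (S : Finset (Fin n)) : Prop :=
  ∀ Y ∈ T.sides, Y ⊆ S → 2 ≤ Y.card →
    ∃ Y₁ Y₂ : Finset (Fin n), Y₁ ∈ T.sides ∧ Y₂ ∈ T.sides ∧
      Disjoint Y₁ Y₂ ∧ Y₁ ∪ Y₂ = Y ∧ Y₁.card = Y₂.card

/-- A perfect tree: either `n = 2^k` and `T` is two perfectly balanced
rooted trees with `2^(k-1)` leaves joined by an edge, or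
`n = 3·2^(k-1)` and `T` is three perfectly balanced rooted trees with
`2^(k-1)` leaves attached to a common vertex. -/
def IsPerfect (T : PhyloTree n) : Prop :=
  (∃ k : ℕ, n = 2 ^ k ∧ ∃ A ∈ T.sides,
      A.card = 2 ^ (k - 1) ∧ T.PerfOn A ∧ T.PerfOn Aᶜ) ∨
  (∃ k : ℕ, n = 3 * 2 ^ (k - 1) ∧ ∃ A B C : Finset (Fin n),
      A ∈ T.sides ∧ B ∈ T.sides ∧ C ∈ T.sides ∧
      Disjoint A B ∧ Disjoint A C ∧ Disjoint B C ∧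
      A ∪ B ∪ C = Finset.univ ∧
      A.card = 2 ^ (k - 1) ∧ B.card = 2 ^ (k - 1) ∧ C.card = 2 ^ (k - 1) ∧
      T.PerfOn A ∧ T.PerfOn B ∧ T.PerfOn C)

end PhyloTree

/-!
Orient the two deleted splits as nested sides `B ⊂ A` shared by `T` and `T' = θ(T)`, each
cutting both trees into the same forest. If `C ⊂ X` is a side of `T` and `X` one of these agreeing
sides, restricting to `X` shows that `C` or `X \ C` is a side of `T'`; when `C` lies inside one of
the blocks `Aᶜ`, `B`, `A \ B`, the side `X \ C` would cross another side of `T'`, so `C` survives.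
Hence the trees differ only in sides strictly between `B` and `A`. If `D` is such a side of one
tree but not of the other, then `D \ B` and `A \ D` are sides of both, and each tree has exactly
one of `D`, `B ∪ (A \ D)`, `A \ B` as a side. Comparing these configurations, `T'` arises from
`T` by swapping the subtree on `Aᶜ` with the subtree on `D \ B` or on `B`: an NNI.
-/

open Finset

namespace SidesCompatible

variable {n : ℕ} {X Y : Finset (Fin n)}

theorem symm (h : SidesCompatible X Y) : SidesCompatible Y X := by
  unfold SidesCompatible at *
  rw [union_comm, disjoint_comm]
  tauto

theorem compl_left (h : SidesCompatible X Y) : SidesCompatible Xᶜ Y := by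
  rcases h with h | h | h | h
  · refine .inr (.inr (.inr (codisjoint_iff.1 (codisjoint_iff_compl_le_right.2 ?_))))
    rwa [compl_compl]
  · exact .inr (.inr (.inl (disjoint_compl_left_iff.2 h)))
  · exact .inr (.inl (subset_compl_iff_disjoint_left.2 h))
  · exact .inl (codisjoint_iff_compl_le_right.1 (codisjoint_iff.2 h))

theorem compl_right (h : SidesCompatible X Y) : SidesCompatible X Yᶜ :=
  h.symm.compl_left.symm

end SidesCompatible

theorem not_sidesCompatible {n : ℕ} {X Y : Finset (Fin n)} {a b c d : Fin n}
    (ha : a ∈ X \ Y) (hb : b ∈ Y \ X) (hc : c ∈ X ∩ Y) (hd : d ∉ X ∪ Y) :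
    ¬SidesCompatible X Y := by
  simp only [mem_sdiff, mem_inter, mem_union, not_or] at ha hb hc hd
  rintro (h | h | h | h)
  · exact ha.2 (h ha.1)
  · exact hb.2 (h hb.1)
  · exact disjoint_left.1 h hc.1 hc.2
  · simpa [hd] using eq_univ_iff_forall.1 h d

namespace PhyloTree

variable {n : ℕ} {S T T' : PhyloTree n} {A B C D E X Y Z : Finset (Fin n)}

theorem sides_injective : Function.Injective (sides : PhyloTree n → Finset (Finset (Fin n))) := by
  rintro ⟨⟩ ⟨⟩ rfl
  rfl

theorem nonempty_of_mem (h : C ∈ S.sides) : C.Nonempty := (S.proper C h).1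

theorem exists_notMem_of_mem (h : C ∈ S.sides) : ∃ x, x ∉ C := by
  simpa [eq_univ_iff_forall] using (S.proper C h).2

theorem compl_nonempty_of_mem (h : C ∈ S.sides) : Cᶜ.Nonempty :=
  let ⟨x, hx⟩ := exists_notMem_of_mem h
  ⟨x, mem_compl.2 hx⟩

theorem compl_mem_iff : Cᶜ ∈ S.sides ↔ C ∈ S.sides :=
  ⟨fun h => by simpa using S.compl_mem _ h, S.compl_mem C⟩

theorem sidesCompatible_of_mem (hC : C ∈ S.sides) (hD : D ∈ S.sides) : SidesCompatible C D :=
  S.compatible C hC D hD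

theorem forall_mem_of_subset_or_subset_compl {P : Finset (Fin n) → Prop} (hA : A ∈ S.sides)
    (hcompl : ∀ C ∈ S.sides, P C → P Cᶜ) (hP : ∀ C ∈ S.sides, C ⊆ A ∨ C ⊆ Aᶜ → P C) :
    ∀ C ∈ S.sides, P C := by
  have hP' : ∀ C ∈ S.sides, Cᶜ ⊆ A ∨ Cᶜ ⊆ Aᶜ → P C := fun C hC h => by
    simpa using hcompl _ (S.compl_mem C hC) (hP _ (S.compl_mem C hC) h)
  intro C hC
  rcases sidesCompatible_of_mem hC hA with h | h | h | h
  · exact hP C hC (.inl h)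
  · exact hP' C hC (.inr (compl_subset_compl.2 h))
  · exact hP C hC (.inr (subset_compl_iff_disjoint_right.2 h))
  · exact hP' C hC (.inl (codisjoint_iff_compl_le_right.1 (codisjoint_iff.2 h)))

theorem forall_mem_of_regions {P : Finset (Fin n) → Prop} (hA : A ∈ S.sides) (hB : B ∈ S.sides)
    (hBA : B ⊆ A) (hcompl : ∀ C ∈ S.sides, P C → P Cᶜ)
    (houter : ∀ C ∈ S.sides, C ⊆ Aᶜ → P C) (hinner : ∀ C ∈ S.sides, C ⊆ B → P C)
    (hmiddle : ∀ C ∈ S.sides, C ⊆ A \ B → P C)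
    (hbetween : ∀ C ∈ S.sides, B ⊂ C → C ⊂ A → P C) :
    ∀ C ∈ S.sides, P C := by
  refine forall_mem_of_subset_or_subset_compl hA hcompl ?_
  rintro C hC (hCA | hCA)
  · rcases sidesCompatible_of_mem hC hB with h | h | h | h
    · exact hinner C hC h
    · rcases LE.le.eq_or_ssubset h with rfl | hBC
      · exact hinner _ hC subset_rfl
      rcases LE.le.eq_or_ssubset hCA with rfl | hCA
      · simpa using hcompl _ (S.compl_mem _ hC) (houter _ (S.compl_mem _ hC) subset_rfl)
      · exact hbetween C hC hBC hCA
    · exact hmiddle C hC (subset_sdiff.2 ⟨hCA, h⟩)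
    · exact absurd (univ_subset_iff.1 (h ▸ union_subset hCA hBA)) (S.proper A hA).2
  · exact houter C hC hCA

theorem mem_or_sdiff_mem_of_restrict_eq (hr : T.restrict X = T'.restrict X)
    (hX : X ∈ T'.sides) (hC : C ∈ T.sides) (hCX : C ⊂ X) :
    C ∈ T'.sides ∨ X \ C ∈ T'.sides := by
  have : C ∈ T'.restrict X := hr ▸ mem_image.2 ⟨C, hC, inter_eq_left.2 hCX.subset⟩
  obtain ⟨D, hD, rfl⟩ := mem_image.1 this
  rcases sidesCompatible_of_mem hD hX with h | h | h | h
  · exact .inl (by rwa [inter_eq_left.2 h])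
  · exact absurd (inter_eq_right.2 h) hCX.ne
  · exact absurd (disjoint_iff_inter_eq_empty.1 h) (nonempty_of_mem hC).ne_empty
  · refine .inr ?_
    convert T'.compl_mem D hD using 1
    ext x
    have := eq_univ_iff_forall.1 h x
    simp only [mem_union, mem_sdiff, mem_inter, mem_compl] at this ⊢
    tauto

/-- Otherwise `X \ C` would be a side of `T'` crossing `Y`. -/
theorem mem_of_ssubset_of_ssubset (hr : T.restrict X = T'.restrict X) (hX : X ∈ T'.sides)
    (hY : Y ∈ T'.sides) (hYX : Y ⊂ X) (hC : C ∈ T.sides) (hCY : C ⊂ Y) : C ∈ T'.sides := by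
  refine (mem_or_sdiff_mem_of_restrict_eq hr hX hC (hCY.trans hYX)).resolve_right fun hXC => ?_
  obtain ⟨a, haX, haY⟩ := exists_of_ssubset hYX
  obtain ⟨b, hb⟩ := nonempty_of_mem hC
  obtain ⟨c, hcY, hcC⟩ := exists_of_ssubset hCY
  obtain ⟨d, hd⟩ := exists_notMem_of_mem hX
  have := hYX.subset
  have := hCY.subset
  exact not_sidesCompatible (a := a) (b := b) (c := c) (d := d) (by grind) (by grind) (by grind)
    (by grind) (sidesCompatible_of_mem hXC hY)

/-- Otherwise `X \ C` and `Y \ C` would be crossing sides of `T'`. -/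
theorem mem_of_ssubset_inter (hrX : T.restrict X = T'.restrict X)
    (hrY : T.restrict Y = T'.restrict Y) (hX : X ∈ T'.sides) (hY : Y ∈ T'.sides)
    (hXY : ¬X ⊆ Y) (hYX : ¬Y ⊆ X) (hC : C ∈ T.sides) (hCXY : C ⊂ X ∩ Y) : C ∈ T'.sides := by
  by_contra hC'
  have hCX : C ⊂ X := ssubset_of_subset_of_ne (hCXY.subset.trans inter_subset_left)
    (by rintro rfl; exact hXY (hCXY.subset.trans inter_subset_right))
  have hCY : C ⊂ Y := ssubset_of_subset_of_ne (hCXY.subset.trans inter_subset_right)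
    (by rintro rfl; exact hYX (hCXY.subset.trans inter_subset_left))
  have h1 := (mem_or_sdiff_mem_of_restrict_eq hrX hX hC hCX).resolve_left hC'
  have h2 := (mem_or_sdiff_mem_of_restrict_eq hrY hY hC hCY).resolve_left hC'
  obtain ⟨a, ha⟩ := sdiff_nonempty.2 hXY
  obtain ⟨b, hb⟩ := sdiff_nonempty.2 hYX
  obtain ⟨c, hcXY, hcC⟩ := exists_of_ssubset hCXY
  obtain ⟨d, hd⟩ := nonempty_of_mem hC
  have := hCXY.subset
  exact not_sidesCompatible (a := a) (b := b) (c := c) (d := d) (by grind) (by grind) (by grind)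
    (by grind) (sidesCompatible_of_mem h1 h2)

/-- `A | Aᶜ` is a split of both trees, and deleting its edge from either leaves the same
forest. -/
def AgreesOnSplit (T T' : PhyloTree n) (A : Finset (Fin n)) : Prop :=
  A ∈ T.sides ∧ A ∈ T'.sides ∧ T.restrict A = T'.restrict A ∧ T.restrict Aᶜ = T'.restrict Aᶜ

theorem AgreesOnSplit.symm (h : AgreesOnSplit T T' A) : AgreesOnSplit T' T A :=
  ⟨h.2.1, h.1, h.2.2.1.symm, h.2.2.2.symm⟩

theorem AgreesOnSplit.compl (h : AgreesOnSplit T T' A) : AgreesOnSplit T T' Aᶜ :=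
  ⟨T.compl_mem A h.1, T'.compl_mem A h.2.1, h.2.2.2, by simpa using h.2.2.1⟩

theorem mem_of_subset_compl (hA : AgreesOnSplit T T' A) (hB : AgreesOnSplit T T' B)
    (hBA : B ⊂ A) (hC : C ∈ T.sides) (hCA : C ⊆ Aᶜ) : C ∈ T'.sides := by
  rcases LE.le.eq_or_ssubset hCA with rfl | hCA
  · exact hA.compl.2.1
  · exact mem_of_ssubset_of_ssubset hB.compl.2.2.1 hB.compl.2.1 hA.compl.2.1
      (compl_ssubset_compl.2 hBA) hC hCA

theorem mem_of_subset_inner (hA : AgreesOnSplit T T' A) (hB : AgreesOnSplit T T' B)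
    (hBA : B ⊂ A) (hC : C ∈ T.sides) (hCB : C ⊆ B) : C ∈ T'.sides := by
  rcases LE.le.eq_or_ssubset hCB with rfl | hCB
  · exact hB.2.1
  · exact mem_of_ssubset_of_ssubset hA.2.2.1 hA.2.1 hB.2.1 hBA hC hCB

theorem mem_of_ssubset_sdiff (hA : AgreesOnSplit T T' A) (hB : AgreesOnSplit T T' B)
    (hBA : B ⊂ A) (hC : C ∈ T.sides) (hCM : C ⊂ A \ B) : C ∈ T'.sides := by
  obtain ⟨b, hb⟩ := nonempty_of_mem hB.1
  obtain ⟨a, ha⟩ := exists_notMem_of_mem hA.1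
  have := hBA.subset
  refine mem_of_ssubset_inter hA.2.2.1 hB.compl.2.2.1 hA.2.1 hB.compl.2.1 ?_ ?_ hC
    (by rwa [← sdiff_eq_inter_compl])
  · exact fun h => mem_compl.1 (h (hBA.subset hb)) hb
  · exact fun h => ha (h (mem_compl.2 fun hab => ha (hBA.subset hab)))

theorem sdiff_mem_iff (hA : A ∈ S.sides) (hB : B ∈ S.sides) (hBA : B ⊂ A) :
    A \ B ∈ S.sides ↔ ∀ C ∈ S.sides, ¬(B ⊂ C ∧ C ⊂ A) := by
  constructor
  · rintro hM C hC ⟨hBC, hCA⟩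
    obtain ⟨a, haA, haC⟩ := exists_of_ssubset hCA
    obtain ⟨b, hb⟩ := nonempty_of_mem hB
    obtain ⟨c, hcC, hcB⟩ := exists_of_ssubset hBC
    obtain ⟨d, hd⟩ := exists_notMem_of_mem hA
    have := hBC.subset
    have := hCA.subset
    exact not_sidesCompatible (a := a) (b := b) (c := c) (d := d) (by grind) (by grind)
      (by grind) (by grind) (sidesCompatible_of_mem hM hC)
  · intro hnone
    refine S.maximal _ (sdiff_nonempty.2 hBA.not_subset) ?_ ?_
    · obtain ⟨b, hb⟩ := nonempty_of_mem hB
      exact fun h => (mem_sdiff.1 (h ▸ mem_univ b)).2 hb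
    refine forall_mem_of_regions hA hB hBA.subset (fun _ _ h => h.compl_right) ?_ ?_ ?_ ?_
    · exact fun C _ hC => .inr (.inr (.inl (disjoint_left.2 fun x hx hxC =>
        mem_compl.1 (hC hxC) (mem_sdiff.1 hx).1)))
    · exact fun C _ hC => .inr (.inr (.inl (disjoint_left.2 fun x hx hxC =>
        (mem_sdiff.1 hx).2 (hC hxC))))
    · exact fun C _ hC => .inr (.inl hC)
    · exact fun C hC hBC hCA => (hnone C hC ⟨hBC, hCA⟩).elim

theorem sdiff_mem_of_notMem (hA : AgreesOnSplit T T' A) (hB : AgreesOnSplit T T' B)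
    (hBA : B ⊂ A) (hC : C ∈ T.sides) (hBC : B ⊂ C) (hCA : C ⊂ A) (hC' : C ∉ T'.sides) :
    C \ B ∈ T.sides ∧ C \ B ∈ T'.sides ∧ A \ C ∈ T.sides ∧ A \ C ∈ T'.sides := by
  have hAC : A \ C ∈ T'.sides :=
    (mem_or_sdiff_mem_of_restrict_eq hA.2.2.1 hA.2.1 hC hCA).resolve_left hC'
  have hCB : C \ B ∈ T'.sides := by
    rw [← compl_sdiff_compl]
    exact (mem_or_sdiff_mem_of_restrict_eq hB.compl.2.2.1 hB.compl.2.1 (T.compl_mem C hC)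
      (compl_ssubset_compl.2 hBC)).resolve_left (by rwa [compl_mem_iff])
  obtain ⟨a, haA, haC⟩ := exists_of_ssubset hCA
  obtain ⟨c, hcC, hcB⟩ := exists_of_ssubset hBC
  have := hBC.subset
  have := hCA.subset
  refine ⟨mem_of_ssubset_sdiff hA.symm hB.symm hBA hCB ?_, hCB,
    mem_of_ssubset_sdiff hA.symm hB.symm hBA hAC ?_, hAC⟩
  · exact (ssubset_iff_of_subset (by grind)).2 ⟨a, by grind⟩
  · exact (ssubset_iff_of_subset (by grind)).2 ⟨c, by grind⟩

/-- A side strictly between `B` and `A` contains one of the blocks `D \ B`, `A \ D` and avoids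
the other. -/
theorem eq_or_eq_of_between (hA : A ∈ S.sides) (hB : B ∈ S.sides) (hG₁ : D \ B ∈ S.sides)
    (hG₂ : A \ D ∈ S.sides) (hBD : B ⊆ D) (hDA : D ⊆ A) (hC : C ∈ S.sides) (hBC : B ⊂ C)
    (hCA : C ⊂ A) : C = D ∨ C = B ∪ (A \ D) := by
  obtain ⟨b, hb⟩ := nonempty_of_mem hB
  obtain ⟨a, ha⟩ := exists_notMem_of_mem hA
  have := hBC.subset
  have := hCA.subset
  have key : ∀ G ∈ S.sides, G ⊆ A \ B → G ⊆ C ∨ Disjoint C G := by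
    intro G hG hGM
    rcases sidesCompatible_of_mem hC hG with h | h | h | h
    · exact absurd (hGM (h (hBC.subset hb))) (by grind)
    · exact .inl h
    · exact .inr h
    · exact absurd (eq_univ_iff_forall.1 h a) (by grind)
  rcases key _ hG₁ (by grind) with h₁ | h₁ <;> rcases key _ hG₂ (by grind) with h₂ | h₂
  · exact absurd (Subset.antisymm hCA.subset (by grind)) hCA.ne
  · exact .inl (by grind [disjoint_left])
  · exact .inr (by grind [disjoint_left])
  · exact absurd (Subset.antisymm (by grind [disjoint_left]) hBC.subset) hBC.ne'

theorem union_sdiff_notMem (hA : A ∈ S.sides) (hB : B ∈ S.sides) (hD : D ∈ S.sides)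
    (hBD : B ⊂ D) (hDA : D ⊂ A) : B ∪ (A \ D) ∉ S.sides := by
  intro hE
  obtain ⟨a, haD, haB⟩ := exists_of_ssubset hBD
  obtain ⟨b, hbA, hbD⟩ := exists_of_ssubset hDA
  obtain ⟨c, hc⟩ := nonempty_of_mem hB
  obtain ⟨d, hd⟩ := exists_notMem_of_mem hA
  have := hBD.subset
  have := hDA.subset
  exact not_sidesCompatible (a := a) (b := b) (c := c) (d := d) (by grind) (by grind)
    (by grind) (by grind) (sidesCompatible_of_mem hD hE)

theorem eq_of_between (hA : A ∈ S.sides) (hB : B ∈ S.sides) (hD : D ∈ S.sides)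
    (hBD : B ⊂ D) (hDA : D ⊂ A) (hG₁ : D \ B ∈ S.sides) (hG₂ : A \ D ∈ S.sides)
    (hC : C ∈ S.sides) (hBC : B ⊂ C) (hCA : C ⊂ A) : C = D :=
  (eq_or_eq_of_between hA hB hG₁ hG₂ hBD.subset hDA.subset hC hBC hCA).resolve_right
    (by rintro rfl; exact union_sdiff_notMem hA hB hD hBD hDA hC)

theorem swapSide_eq_self (hY : ¬Y ⊆ C) (hZ : ¬Z ⊆ C) : swapSide Y Z C = C := by
  simp [swapSide, hY, hZ]

theorem swapSide_of_subset_left (hY : Y ⊆ C) (hZ : Disjoint Z C) :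
    swapSide Y Z C = C \ Y ∪ Z :=
  if_pos ⟨hY, hZ⟩

theorem swapSide_of_subset_right (hY : Y.Nonempty) (hYC : Disjoint Y C) (hZ : Z ⊆ C) :
    swapSide Y Z C = C \ Z ∪ Y := by
  obtain ⟨y, hy⟩ := hY
  rw [swapSide, if_neg (fun h => disjoint_left.1 hYC hy (h.1 hy)), if_pos ⟨hZ, hYC⟩]

theorem swapSide_compl : swapSide Y Z Cᶜ = (swapSide Y Z C)ᶜ := by
  unfold swapSide
  split_ifs <;> grind [disjoint_left, mem_compl]

theorem swapSide_involutive (hYZ : Disjoint Y Z) : Function.Involutive (swapSide Y Z) := by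
  intro C
  unfold swapSide
  split_ifs <;> grind [disjoint_left, mem_compl]

theorem sides_eq_image_swapSide (hYZ : Disjoint Y Z) (h : ∀ C ∈ T.sides, swapSide Y Z C ∈ T'.sides)
    (h' : ∀ C ∈ T'.sides, swapSide Y Z C ∈ T.sides) :
    T'.sides = T.sides.image (swapSide Y Z) := by
  ext C
  refine ⟨fun hC => mem_image.2 ⟨_, h' C hC, swapSide_involutive hYZ C⟩, fun hC => ?_⟩
  obtain ⟨D, hD, rfl⟩ := mem_image.1 hC
  exact h D hD

theorem swapSide_mem_of_subset_compl (hA : AgreesOnSplit T T' A) (hB : AgreesOnSplit T T' B)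
    (hBA : B ⊂ A) (hZA : Z ⊆ A) (hZ : Z ∈ T'.sides) (hC : C ∈ T.sides) (hCA : C ⊆ Aᶜ) :
    swapSide Aᶜ Z C ∈ T'.sides := by
  rcases LE.le.eq_or_ssubset hCA with rfl | hCA
  · rwa [swapSide_of_subset_left subset_rfl (disjoint_compl_right_iff.2 hZA), Finset.sdiff_self,
      empty_union]
  · obtain ⟨z, hz⟩ := nonempty_of_mem hZ
    rw [swapSide_eq_self hCA.not_subset fun h => mem_compl.1 (hCA.subset (h hz)) (hZA hz)]
    exact mem_of_subset_compl hA hB hBA hC hCA.subset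

/-- Stated so as to serve both directions between the tree in which `Aᶜ`, `B` and `A \ B` meet
at a vertex and the tree with the side `D`. -/
theorem swapSide_sdiff_mem (hA : AgreesOnSplit T T' A) (hB : AgreesOnSplit T T' B) (hBA : B ⊂ A)
    (hBD : B ⊂ D) (hDA : D ⊂ A) (hG₁ : D \ B ∈ T'.sides) (hG₂ : A \ D ∈ T.sides)
    (hmid : ∀ C ∈ T.sides, B ⊂ C → C ⊂ A → C = D) (hM : A \ B ∈ T.sides → Dᶜ ∈ T'.sides)
    (hD : D ∈ T.sides → A \ B ∈ T'.sides) :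
    ∀ C ∈ T.sides, swapSide Aᶜ (D \ B) C ∈ T'.sides := by
  obtain ⟨a, ha⟩ := exists_notMem_of_mem hA.1
  obtain ⟨g, hg⟩ := nonempty_of_mem hG₁
  have hAc := compl_nonempty_of_mem hA.1
  have := hBD.subset
  have := hDA.subset
  refine forall_mem_of_regions hA.1 hB.1 hBA.subset
    (fun C _ h => by rw [swapSide_compl]; exact T'.compl_mem _ h) ?_ ?_ ?_ ?_
  · exact fun C hC hCA => swapSide_mem_of_subset_compl hA hB hBA (by grind) hG₁ hC hCA
  · intro C hC hCB
    rw [swapSide_eq_self (fun h => ha (hBA.subset (hCB (h (mem_compl.2 ha)))))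
      (fun h => (mem_sdiff.1 hg).2 (hCB (h hg)))]
    exact mem_of_subset_inner hA hB hBA hC hCB
  · intro C hC hCM
    have hCA : Disjoint Aᶜ C := disjoint_compl_left_iff.2 (hCM.trans sdiff_subset)
    by_cases hGC : D \ B ⊆ C
    · rw [swapSide_of_subset_right hAc hCA hGC]
      rcases sidesCompatible_of_mem hC hG₂ with h | h | h | h
      · exact absurd (h (hGC hg)) (by grind)
      · obtain rfl : C = A \ B := Subset.antisymm hCM (by grind)
        convert hM hC using 1
        grind [mem_compl]
      · obtain rfl : C = D \ B := Subset.antisymm (by grind [disjoint_left]) hGC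
        rw [Finset.sdiff_self, empty_union]
        exact hA.compl.2.1
      · exact absurd (eq_univ_iff_forall.1 h a) (by grind)
    · rw [swapSide_eq_self (fun h => ha (mem_sdiff.1 (hCM (h (mem_compl.2 ha)))).1) hGC]
      exact mem_of_ssubset_sdiff hA hB hBA hC
        (ssubset_of_subset_of_ne hCM (by rintro rfl; exact hGC (by grind)))
  · intro C hC hBC hCA
    obtain rfl := hmid C hC hBC hCA
    rw [swapSide_of_subset_right hAc (disjoint_compl_left_iff.2 hCA.subset) sdiff_subset]
    convert T'.compl_mem _ (hD hC) using 1
    grind [mem_compl]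

theorem swapSide_inner_mem (hA : AgreesOnSplit T T' A) (hB : AgreesOnSplit T T' B)
    (hBA : B ⊂ A) (hmid : ∀ C ∈ T.sides, B ⊂ C → C ⊂ A → C = E)
    (hE : B ∪ (A \ E) ∈ T'.sides) (hM : A \ B ∉ T.sides) :
    ∀ C ∈ T.sides, swapSide Aᶜ B C ∈ T'.sides := by
  obtain ⟨a, ha⟩ := exists_notMem_of_mem hA.1
  obtain ⟨b, hb⟩ := nonempty_of_mem hB.1
  have hAc := compl_nonempty_of_mem hA.1
  have hdisj : Disjoint Aᶜ B := disjoint_compl_left_iff.2 hBA.subset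
  refine forall_mem_of_regions hA.1 hB.1 hBA.subset
    (fun C _ h => by rw [swapSide_compl]; exact T'.compl_mem _ h) ?_ ?_ ?_ ?_
  · exact fun C hC hCA => swapSide_mem_of_subset_compl hA hB hBA hBA.subset hB.2.1 hC hCA
  · intro C hC hCB
    rcases LE.le.eq_or_ssubset hCB with rfl | hCB
    · rw [swapSide_of_subset_right hAc hdisj subset_rfl, Finset.sdiff_self, empty_union]
      exact hA.compl.2.1
    · rw [swapSide_eq_self (fun h => ha (hBA.subset (hCB.subset (h (mem_compl.2 ha)))))
        hCB.not_subset]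
      exact mem_of_subset_inner hA hB hBA hC hCB.subset
  · intro C hC hCM
    rw [swapSide_eq_self (fun h => ha (mem_sdiff.1 (hCM (h (mem_compl.2 ha)))).1)
      (fun h => (mem_sdiff.1 (hCM (h hb))).2 hb)]
    exact mem_of_ssubset_sdiff hA hB hBA hC
      (ssubset_of_subset_of_ne hCM (by rintro rfl; exact hM hC))
  · intro C hC hBC hCA
    obtain rfl := hmid C hC hBC hCA
    rw [swapSide_of_subset_right hAc (disjoint_compl_left_iff.2 hCA.subset) hBC.subset]
    convert T'.compl_mem _ hE using 1
    have := hBC.subset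
    have := hCA.subset
    grind [mem_compl]

theorem sides_subset (hA : AgreesOnSplit T T' A) (hB : AgreesOnSplit T T' B) (hBA : B ⊂ A)
    (hstable : ∀ C ∈ T.sides, B ⊂ C → C ⊂ A → C ∈ T'.sides)
    (hstable' : ∀ C ∈ T'.sides, B ⊂ C → C ⊂ A → C ∈ T.sides) : T.sides ⊆ T'.sides := by
  refine forall_mem_of_regions hA.1 hB.1 hBA.subset (fun C _ h => T'.compl_mem C h)
    (fun C hC hCA => mem_of_subset_compl hA hB hBA hC hCA)
    (fun C hC hCB => mem_of_subset_inner hA hB hBA hC hCB) (fun C hC hCM => ?_) hstable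
  rcases LE.le.eq_or_ssubset hCM with rfl | hCM
  · refine (sdiff_mem_iff hA.2.1 hB.2.1 hBA).2 fun D hD hBDA => ?_
    exact (sdiff_mem_iff hA.1 hB.1 hBA).1 hC D (hstable' D hD hBDA.1 hBDA.2) hBDA
  · exact mem_of_ssubset_sdiff hA hB hBA hC hCM

theorem sides_eq_image_swapSide_sdiff (hA : AgreesOnSplit T T' A) (hB : AgreesOnSplit T T' B)
    (hBA : B ⊂ A) (hD : D ∈ T'.sides) (hBD : B ⊂ D) (hDA : D ⊂ A) (hDT : D ∉ T.sides)
    (hstable : ∀ C ∈ T.sides, B ⊂ C → C ⊂ A → C ∈ T'.sides) :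
    T'.sides = T.sides.image (swapSide Aᶜ (D \ B)) := by
  obtain ⟨hG₁', hG₁, hG₂', hG₂⟩ := sdiff_mem_of_notMem hA.symm hB.symm hBA hD hBD hDA hDT
  have hmid' : ∀ C ∈ T'.sides, B ⊂ C → C ⊂ A → C = D :=
    fun C => eq_of_between hA.2.1 hB.2.1 hD hBD hDA hG₁' hG₂'
  have hnone : ∀ C ∈ T.sides, ¬(B ⊂ C ∧ C ⊂ A) := fun C hC ⟨hBC, hCA⟩ =>
    hDT (hmid' C (hstable C hC hBC hCA) hBC hCA ▸ hC)
  have hM : A \ B ∈ T.sides := (sdiff_mem_iff hA.1 hB.1 hBA).2 hnone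
  have hM' : A \ B ∉ T'.sides := fun h => (sdiff_mem_iff hA.2.1 hB.2.1 hBA).1 h D hD ⟨hBD, hDA⟩
  have hZA : D \ B ⊆ A := sdiff_subset.trans hDA.subset
  refine sides_eq_image_swapSide (disjoint_compl_left_iff.2 hZA) ?_ ?_
  · exact swapSide_sdiff_mem hA hB hBA hBD hDA hG₁' hG₂
      (fun C hC hBC hCA => (hnone C hC ⟨hBC, hCA⟩).elim) (fun _ => T'.compl_mem D hD)
      (fun h => (hDT h).elim)
  · exact swapSide_sdiff_mem hA.symm hB.symm hBA hBD hDA hG₁ hG₂' hmid' (fun h => (hM' h).elim)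
      (fun _ => hM)

theorem sides_eq_image_swapSide_inner (hA : AgreesOnSplit T T' A) (hB : AgreesOnSplit T T' B)
    (hBA : B ⊂ A) (hD : D ∈ T'.sides) (hBD : B ⊂ D) (hDA : D ⊂ A) (hDT : D ∉ T.sides)
    (hE : E ∈ T.sides) (hBE : B ⊂ E) (hEA : E ⊂ A) :
    T'.sides = T.sides.image (swapSide Aᶜ B) := by
  obtain ⟨hG₁', hG₁, hG₂', hG₂⟩ := sdiff_mem_of_notMem hA.symm hB.symm hBA hD hBD hDA hDT
  have hmid : ∀ C ∈ T.sides, B ⊂ C → C ⊂ A → C = B ∪ (A \ D) := fun C hC hBC hCA =>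
    (eq_or_eq_of_between hA.1 hB.1 hG₁ hG₂ hBD.subset hDA.subset hC hBC hCA).resolve_left
      (by rintro rfl; exact hDT hC)
  have hmid' : ∀ C ∈ T'.sides, B ⊂ C → C ⊂ A → C = D :=
    fun C => eq_of_between hA.2.1 hB.2.1 hD hBD hDA hG₁' hG₂'
  obtain rfl := hmid E hE hBE hEA
  have := hBD.subset
  have := hDA.subset
  refine sides_eq_image_swapSide (disjoint_compl_left_iff.2 hBA.subset) ?_ ?_
  · refine swapSide_inner_mem hA hB hBA hmid ?_
      fun h => (sdiff_mem_iff hA.1 hB.1 hBA).1 h _ hE ⟨hBE, hEA⟩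
    convert hD using 1
    grind
  · exact swapSide_inner_mem hA.symm hB.symm hBA hmid' hE
      fun h => (sdiff_mem_iff hA.2.1 hB.2.1 hBA).1 h D hD ⟨hBD, hDA⟩

theorem exists_sides_eq_image_swapSide (hA : AgreesOnSplit T T' A)
    (hB : AgreesOnSplit T T' B) (hBA : B ⊂ A) (hne : T ≠ T') :
    ∃ Z ∈ T.sides, Z ⊆ A ∧ T'.sides = T.sides.image (swapSide Aᶜ Z) := by
  by_cases hT : ∃ E ∈ T.sides, B ⊂ E ∧ E ⊂ A ∧ E ∉ T'.sides <;>
    by_cases hT' : ∃ D ∈ T'.sides, B ⊂ D ∧ D ⊂ A ∧ D ∉ T.sides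
  · obtain ⟨E, hE, hBE, hEA, -⟩ := hT
    obtain ⟨D, hD, hBD, hDA, hDT⟩ := hT'
    exact ⟨B, hB.1, hBA.subset,
      sides_eq_image_swapSide_inner hA hB hBA hD hBD hDA hDT hE hBE hEA⟩
  · push Not at hT'
    obtain ⟨E, hE, hBE, hEA, hET⟩ := hT
    have hZA : E \ B ⊆ A := sdiff_subset.trans hEA.subset
    refine ⟨E \ B, (sdiff_mem_of_notMem hA hB hBA hE hBE hEA hET).1, hZA, ?_⟩
    rw [sides_eq_image_swapSide_sdiff hA.symm hB.symm hBA hE hBE hEA hET hT', image_image,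
      (swapSide_involutive (disjoint_compl_left_iff.2 hZA)).comp_self, image_id]
  · push Not at hT
    obtain ⟨D, hD, hBD, hDA, hDT⟩ := hT'
    exact ⟨D \ B, (sdiff_mem_of_notMem hA.symm hB.symm hBA hD hBD hDA hDT).2.1,
      sdiff_subset.trans hDA.subset, sides_eq_image_swapSide_sdiff hA hB hBA hD hBD hDA hDT hT⟩
  · push Not at hT hT'
    exact absurd (sides_injective (Subset.antisymm (sides_subset hA hB hBA hT hT')
      (sides_subset hA.symm hB.symm hBA hT' hT))) hne

theorem compl_inter_mem_restrict (h : C ∩ X ∈ S.restrict X) : Cᶜ ∩ X ∈ S.restrict X := by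
  obtain ⟨D, hD, hDC⟩ := mem_image.1 h
  refine mem_image.2 ⟨Dᶜ, S.compl_mem D hD, ?_⟩
  ext y
  have := congrArg (y ∈ ·) hDC
  simp only [mem_inter, mem_compl, eq_iff_iff] at this ⊢
  tauto

theorem restrict_insert_subset (hA : AgreesOnSplit T T' A) (hB : AgreesOnSplit T T' B)
    (hBA : B ⊂ A) {x : Fin n} (hx : x ∈ B) :
    T.restrict (insert x Aᶜ) ⊆ T'.restrict (insert x Aᶜ) := by
  obtain ⟨m, hmA, hmB⟩ := exists_of_ssubset hBA
  have key : ∀ C ∈ T.sides, C ∩ insert x Aᶜ ∈ T'.restrict (insert x Aᶜ) := by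
    refine forall_mem_of_subset_or_subset_compl hA.1 (fun C _ h => compl_inter_mem_restrict h) ?_
    rintro C hC (hCA | hCA)
    · by_cases hxC : x ∈ C
      · exact mem_image.2 ⟨{x}, T'.singleton_mem x, by grind [mem_compl]⟩
      · exact mem_image.2 ⟨{m}, T'.singleton_mem m, by grind [mem_compl]⟩
    · exact mem_image_of_mem _ (mem_of_subset_compl hA hB hBA hC hCA)
  intro _ h
  obtain ⟨C, hC, rfl⟩ := mem_image.1 h
  exact key C hC

theorem mem_ONNI_of_agreesOnSplit {θ : Move n} (hθ : θ ∈ T.OTBR) (hA : AgreesOnSplit T θ.2 A)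
    (hB : AgreesOnSplit T θ.2 B) (hBA : B ⊂ A) (hθA : θ.1 = Sym2.mk A Aᶜ) : θ ∈ T.ONNI := by
  obtain ⟨Z, hZ, hZA, himg⟩ := exists_sides_eq_image_swapSide hA hB hBA (Ne.symm hθ.1)
  obtain ⟨x, hx⟩ := nonempty_of_mem hB.1
  obtain ⟨z, hz⟩ := nonempty_of_mem hZ
  refine ⟨hθ, Aᶜ, Z, by rw [hθA, compl_compl, Sym2.eq_swap], ⟨x, ?_, ?_⟩, hZ, ?_,
    disjoint_compl_left_iff.2 hZA, himg⟩
  · rw [compl_compl]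
    exact hBA.subset hx
  · exact Subset.antisymm (restrict_insert_subset hA hB hBA hx)
      (restrict_insert_subset hA.symm hB.symm hBA hx)
  · rintro rfl
    exact mem_compl.1 hz (hZA hz)

theorem exists_ssubset_of_agreesOnSplit {A₀ B₀ : Finset (Fin n)} (hA₀ : AgreesOnSplit T T' A₀)
    (hB₀ : AgreesOnSplit T T' B₀) (hne : Sym2.mk A₀ A₀ᶜ ≠ Sym2.mk B₀ B₀ᶜ) :
    ∃ A B, AgreesOnSplit T T' A ∧ AgreesOnSplit T T' B ∧ B ⊂ A ∧
      Sym2.mk A Aᶜ = Sym2.mk A₀ A₀ᶜ := by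
  have hAB : B₀ ≠ A₀ := by rintro rfl; exact hne rfl
  have hABc : B₀ ≠ A₀ᶜ := by rintro rfl; exact hne (by rw [compl_compl, Sym2.eq_swap])
  have hswap : Sym2.mk A₀ᶜ A₀ᶜᶜ = Sym2.mk A₀ A₀ᶜ := by rw [compl_compl, Sym2.eq_swap]
  rcases sidesCompatible_of_mem hA₀.1 hB₀.1 with h | h | h | h
  · exact ⟨_, _, hA₀.compl, hB₀.compl, compl_ssubset_compl.2 (ssubset_of_subset_of_ne h hAB.symm),
      hswap⟩
  · exact ⟨_, _, hA₀, hB₀, ssubset_of_subset_of_ne h hAB, rfl⟩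
  · exact ⟨_, _, hA₀.compl, hB₀, ssubset_of_subset_of_ne (subset_compl_iff_disjoint_left.2 h)
      hABc, hswap⟩
  · refine ⟨_, _, hA₀, hB₀.compl, ssubset_of_subset_of_ne
      (codisjoint_iff_compl_le_left.1 (codisjoint_iff.2 h)) ?_, rfl⟩
    rintro rfl
    exact hABc (compl_compl _).symm

end PhyloTree

theorem redundant_tbr_is_nni_general (n : ℕ) (T : PhyloTree n)
    (θ θ' : PhyloTree.Move n) (hθ : θ ∈ T.OTBR) (hθ' : θ' ∈ T.OTBR)
    (hne : θ ≠ θ') (heq : θ.2 = θ'.2) :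
    θ ∈ T.ONNI := by
  obtain ⟨A₀, hθA₀, hA₀⟩ := hθ.2
  obtain ⟨B₀, hθB₀, hB₀⟩ := hθ'.2
  rw [← heq] at hB₀
  have hsplit : Sym2.mk A₀ A₀ᶜ ≠ Sym2.mk B₀ B₀ᶜ := by
    rw [← hθA₀, ← hθB₀]
    exact fun h => hne (Prod.ext h heq)
  obtain ⟨A, B, hA, hB, hBA, hθA⟩ := PhyloTree.exists_ssubset_of_agreesOnSplit hA₀ hB₀ hsplit
  exact PhyloTree.mem_ONNI_of_agreesOnSplit hθ hA hB hBA (hθA₀.trans hθA.symm)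

/-- Lemma 1: if `θ, θ' ∈ O_TBR(T)` are distinct TBR
operations with `θ(T) = θ'(T)`, then `θ ∈ O_NNI(T)`. -/
theorem redundant_tbr_is_nni (n : ℕ) (hn : 4 ≤ n) (T : PhyloTree n)
    (θ θ' : PhyloTree.Move n) (hθ : θ ∈ T.OTBR) (hθ' : θ' ∈ T.OTBR)
    (hne : θ ≠ θ') (heq : θ.2 = θ'.2) :
    θ ∈ T.ONNI :=
  redundant_tbr_is_nni_general n T θ θ' hθ hθ' hne heq
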